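/- Upper-bound version of the polytopic embedding: let L₀, …, L_N be symmetric n×n real matrices, χ > 0, and define Φ̄_i := Σ_{k=0}^{i} L_k χ^k. Fix x ∈ ℝⁿ. If xᵀΦ̄_i x ≥ 0 for all i ∈ {0, …, N}, then xᵀ(Σ_{k=0}^{N} L_k σ^k) x ≥ 0 for every σ ∈ [0, χ]. -/

import Mathlib

open Matrix Finset

/-! The value at `σ ∈ [0, χ]` is `Σ tᵏ bₖ` with `t = σ / χ ∈ [0, 1]` and `bₖ = χᵏ xᵀLₖx`, whose
partial sums are the vertex values. Since `k ↦ tᵏ` is nonnegative and antitone, Abel summation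
writes `Σ tᵏ bₖ` as a nonnegative combination of those partial sums. -/

section AbelInequality

variable {R : Type*} [Semiring R] [PartialOrder R] [IsOrderedRing R] {c b : ℕ → R}

theorem mul_sum_range_le_sum_range_mul_of_antitone (hc : Antitone c) {N : ℕ}
    (hb : ∀ i ≤ N, 0 ≤ ∑ k ∈ range (i + 1), b k) :
    c N * ∑ k ∈ range (N + 1), b k ≤ ∑ k ∈ range (N + 1), c k * b k := by
  induction N with
  | zero => simp
  | succ N ih =>
    have hS : 0 ≤ ∑ k ∈ range (N + 1), b k := hb N N.le_succ
    calc c (N + 1) * ∑ k ∈ range (N + 2), b k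
        = c (N + 1) * ∑ k ∈ range (N + 1), b k + c (N + 1) * b (N + 1) := by
          rw [sum_range_succ _ (N + 1), mul_add]
      _ ≤ c N * ∑ k ∈ range (N + 1), b k + c (N + 1) * b (N + 1) := by
          gcongr
          exact hc N.le_succ
      _ ≤ ∑ k ∈ range (N + 1), c k * b k + c (N + 1) * b (N + 1) := by
          gcongr
          exact ih fun i hi => hb i (hi.trans N.le_succ)
      _ = ∑ k ∈ range (N + 2), c k * b k := (sum_range_succ _ (N + 1)).symm

theorem sum_range_mul_nonneg_of_antitone (hc : Antitone c) {N : ℕ} (hcN : 0 ≤ c N)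
    (hb : ∀ i ≤ N, 0 ≤ ∑ k ∈ range (i + 1), b k) :
    0 ≤ ∑ k ∈ range (N + 1), c k * b k :=
  (mul_nonneg hcN (hb N le_rfl)).trans (mul_sum_range_le_sum_range_mul_of_antitone hc hb)

end AbelInequality

theorem dotProduct_sum_smul_mulVec {ι m α : Type*} [Fintype m] [CommSemiring α]
    (s : Finset ι) (c : ι → α) (M : ι → Matrix m m α) (u v : m → α) :
    u ⬝ᵥ (∑ k ∈ s, c k • M k) *ᵥ v = ∑ k ∈ s, c k * (u ⬝ᵥ M k *ᵥ v) := by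
  simp only [sum_mulVec, dotProduct_sum, smul_mulVec, dotProduct_smul, smul_eq_mul]

theorem polytopic_embedding_upper_general {n N : ℕ}
    (L : ℕ → Matrix (Fin n) (Fin n) ℝ)
    (χ : ℝ) (x : Fin n → ℝ)
    (hvert : ∀ i ≤ N, 0 ≤ x ⬝ᵥ (∑ k ∈ range (i + 1), χ ^ k • L k).mulVec x) :
    ∀ σ ∈ Set.Icc (0 : ℝ) χ,
      0 ≤ x ⬝ᵥ (∑ k ∈ range (N + 1), σ ^ k • L k).mulVec x := by
  rintro σ ⟨hσ0, hσχ⟩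
  set t := σ / χ
  have ht0 : 0 ≤ t := div_nonneg hσ0 (hσ0.trans hσχ)
  have ht1 : t ≤ 1 := div_le_one_of_le₀ hσχ (hσ0.trans hσχ)
  -- `σ = t * χ` also when `χ = 0`, since then `σ = 0`
  have hσ : σ = t * χ := (div_mul_cancel_of_imp fun hχ0 => le_antisymm (hχ0 ▸ hσχ) hσ0).symm
  simp only [dotProduct_sum_smul_mulVec] at hvert ⊢
  have hsplit : ∀ k, σ ^ k * (x ⬝ᵥ L k *ᵥ x) = t ^ k * (χ ^ k * (x ⬝ᵥ L k *ᵥ x)) := fun k => by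
    rw [hσ, mul_pow, mul_assoc]
  simp only [hsplit]
  exact sum_range_mul_nonneg_of_antitone (pow_right_anti₀ ht0 ht1) (pow_nonneg ht0 N) hvert

/-- Polytopic embedding of matrix polynomials (upper-bound, quadratic-form version):
if the quadratic form of each partial-sum vertex `Φ̄_i = Σ_{k=0}^{i} L_k χ^k` at `x`
is nonnegative, then `xᵀ(Σ_{k=0}^{N} L_k σ^k)x ≥ 0` for every `σ ∈ [0, χ]`. -/
theorem polytopic_embedding_upper {n N : ℕ}
    (L : ℕ → Matrix (Fin n) (Fin n) ℝ) (hL : ∀ k, (L k).IsSymm)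
    (χ : ℝ) (hχ : 0 < χ) (x : Fin n → ℝ)
    (hvert : ∀ i ≤ N, 0 ≤ x ⬝ᵥ (∑ k ∈ range (i + 1), χ ^ k • L k).mulVec x) :
    ∀ σ ∈ Set.Icc (0 : ℝ) χ,
      0 ≤ x ⬝ᵥ (∑ k ∈ range (N + 1), σ ^ k • L k).mulVec x :=
  polytopic_embedding_upper_general L χ x hvert
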